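/- Let M₊ be the focal submanifold of an FKM-type isoparametric polynomial determined by a symmetric Clifford system {P₀,...,P_m} on ℝ^{2l}. At any point x ∈ M₊, the squared norm of the second fundamental form equals S = 2(l-m-1)(m+1). -/

import Mathlib

/-!
At a point `x` of `M₊` the vectors `x`, `P₀x, …, P_m x` and the tangent frame `e₁, …, e_N`
form an orthonormal basis of `ℝ^{2l}`. As `P_α` is an isometry, Parseval's identity for
`P_α e_i` gives `Σ_j ⟨P_α e_i, e_j⟩² = 1 - Σ_β ⟨e_i, P_α P_β x⟩²`. For `β ≠ α` the vector
`P_α P_β x` is a unit vector orthogonal to `x` and to every `P_γ x` (a product of two or three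
distinct `P`'s is skew-symmetric), so Parseval again gives `Σ_i ⟨e_i, P_α P_β x⟩² = 1`, while for
`β = α` the term vanishes. Each `α` thus contributes `N - m = 2l - 2(m + 1)`.
-/

open Matrix

section OrthonormalFamily

variable {κ n : Type*} [Fintype n] [DecidableEq κ] {b : κ → n → ℝ}

lemma of_mul_transpose_eq_one_of_orthonormal (hb : ∀ i j, b i ⬝ᵥ b j = if i = j then 1 else 0) :
    of b * (of b)ᵀ = 1 := by
  ext i j
  simpa [mul_apply, dotProduct, one_apply] using hb i j

variable [Fintype κ]

lemma card_le_card_of_orthonormal (hb : ∀ i j, b i ⬝ᵥ b j = if i = j then 1 else 0) :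
    Fintype.card κ ≤ Fintype.card n :=
  calc Fintype.card κ = (1 : Matrix κ κ ℝ).rank := rank_one.symm
    _ = (of b * (of b)ᵀ).rank := by rw [of_mul_transpose_eq_one_of_orthonormal hb]
    _ ≤ (of b).rank := rank_mul_le_left _ _
    _ ≤ Fintype.card n := rank_le_card_width _

lemma sum_sq_dotProduct_of_orthonormal (hb : ∀ i j, b i ⬝ᵥ b j = if i = j then 1 else 0)
    (hcard : Fintype.card κ = Fintype.card n) (u : n → ℝ) :
    ∑ r, (u ⬝ᵥ b r) ^ 2 = u ⬝ᵥ u := by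
  classical
  have hBtB : (of b)ᵀ * of b = 1 :=
    (mul_eq_one_comm_of_card_eq κ n ℝ hcard).mp (of_mul_transpose_eq_one_of_orthonormal hb)
  calc ∑ r, (u ⬝ᵥ b r) ^ 2 = (of b *ᵥ u) ⬝ᵥ (of b *ᵥ u) := by
        simp only [dotProduct, mulVec, of_apply, sq, mul_comm]
    _ = u ⬝ᵥ (((of b)ᵀ * of b) *ᵥ u) := by
        rw [← mulVec_mulVec, dotProduct_transpose_mulVec, dotProduct_comm]
    _ = u ⬝ᵥ u := by rw [hBtB, one_mulVec]

end OrthonormalFamily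

lemma Matrix.IsSymm.mulVec_dotProduct {n : Type*} [Fintype n] {A : Matrix n n ℝ}
    (hA : A.IsSymm) (u v : n → ℝ) : (A *ᵥ u) ⬝ᵥ v = u ⬝ᵥ (A *ᵥ v) := by
  rw [dotProduct_comm, ← dotProduct_transpose_mulVec, hA.eq]

lemma dotProduct_mulVec_self_of_transpose_eq_neg {n : Type*} [Fintype n] {A : Matrix n n ℝ}
    (hA : Aᵀ = -A) (x : n → ℝ) : x ⬝ᵥ (A *ᵥ x) = 0 := by
  have h : x ⬝ᵥ (A *ᵥ x) = -(x ⬝ᵥ (A *ᵥ x)) := by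
    rw [← dotProduct_neg, ← neg_mulVec, ← hA, dotProduct_transpose_mulVec]
  linarith

def adaptedFrame {ι κ n : Type*} [Fintype n] (P : ι → Matrix n n ℝ) (x : n → ℝ)
    (e : κ → n → ℝ) : Unit ⊕ ι ⊕ κ → n → ℝ :=
  Sum.elim (fun _ => x) (Sum.elim (fun β => P β *ᵥ x) e)

lemma dotProduct_self_eq_sum_sq_adaptedFrame {ι κ n : Type*} [Fintype ι] [Fintype κ] [Fintype n]
    [DecidableEq ι] [DecidableEq κ] {P : ι → Matrix n n ℝ} {x : n → ℝ} {e : κ → n → ℝ}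
    (hframe : ∀ a b, adaptedFrame P x e a ⬝ᵥ adaptedFrame P x e b = if a = b then 1 else 0)
    (hcard : Fintype.card κ + Fintype.card ι + 1 = Fintype.card n) (u : n → ℝ) :
    u ⬝ᵥ u = (u ⬝ᵥ x) ^ 2 + ∑ β, (u ⬝ᵥ (P β *ᵥ x)) ^ 2 + ∑ j, (u ⬝ᵥ e j) ^ 2 := by
  classical
  have hcard' : Fintype.card (Unit ⊕ ι ⊕ κ) = Fintype.card n := by
    simp only [Fintype.card_sum, Fintype.card_unit]
    omega
  rw [← sum_sq_dotProduct_of_orthonormal hframe hcard']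
  simp only [Fintype.sum_sum_type, adaptedFrame, Sum.elim_inl, Sum.elim_inr, Finset.univ_unique,
    Finset.sum_singleton]
  ring

structure IsSymmCliffordSystem {ι n : Type*} [Fintype n] [DecidableEq ι] [DecidableEq n]
    (P : ι → Matrix n n ℝ) : Prop where
  isSymm : ∀ i, (P i).IsSymm
  anticomm : ∀ i j, P i * P j + P j * P i = if i = j then (2 : ℝ) • 1 else 0

namespace IsSymmCliffordSystem

variable {ι n : Type*} [Fintype n] [DecidableEq ι] [DecidableEq n] {P : ι → Matrix n n ℝ}
  {x : n → ℝ}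

lemma mul_self (hP : IsSymmCliffordSystem P) (i : ι) : P i * P i = 1 := by
  have h := hP.anticomm i i
  rw [if_pos rfl, ← two_smul ℝ] at h
  exact smul_right_injective _ two_ne_zero h

lemma mul_eq_neg_mul (hP : IsSymmCliffordSystem P) {i j : ι} (h : i ≠ j) :
    P i * P j = -(P j * P i) := by
  have := hP.anticomm i j
  rw [if_neg h] at this
  exact eq_neg_of_add_eq_zero_left this

lemma transpose_mul (hP : IsSymmCliffordSystem P) {i j : ι} (h : i ≠ j) :
    (P i * P j)ᵀ = -(P i * P j) := by
  rw [Matrix.transpose_mul, (hP.isSymm i).eq, (hP.isSymm j).eq, hP.mul_eq_neg_mul h, neg_neg]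

lemma transpose_mul_mul (hP : IsSymmCliffordSystem P) {i j k : ι} (hij : i ≠ j) (hik : i ≠ k)
    (hjk : j ≠ k) : (P i * P j * P k)ᵀ = -(P i * P j * P k) := by
  rw [Matrix.transpose_mul, Matrix.transpose_mul, (hP.isSymm i).eq, (hP.isSymm j).eq,
    (hP.isSymm k).eq, hP.mul_eq_neg_mul hij.symm, Matrix.mul_neg, ← Matrix.mul_assoc,
    hP.mul_eq_neg_mul hik.symm, Matrix.neg_mul, neg_neg, Matrix.mul_assoc (P i),
    hP.mul_eq_neg_mul hjk.symm, Matrix.mul_neg, Matrix.mul_assoc]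

lemma mulVec_dotProduct_mulVec_self (hP : IsSymmCliffordSystem P) (i : ι) (u v : n → ℝ) :
    (P i *ᵥ u) ⬝ᵥ (P i *ᵥ v) = u ⬝ᵥ v := by
  rw [(hP.isSymm i).mulVec_dotProduct, mulVec_mulVec, hP.mul_self, one_mulVec]

lemma mulVec_dotProduct_mulVec (hP : IsSymmCliffordSystem P) (hx : x ⬝ᵥ x = 1)
    (i j : ι) : (P i *ᵥ x) ⬝ᵥ (P j *ᵥ x) = if i = j then 1 else 0 := by
  split_ifs with h
  · rw [h, hP.mulVec_dotProduct_mulVec_self, hx]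
  · rw [(hP.isSymm i).mulVec_dotProduct, mulVec_mulVec,
      dotProduct_mulVec_self_of_transpose_eq_neg (hP.transpose_mul h)]

lemma mul_mulVec_dotProduct_self (hP : IsSymmCliffordSystem P) (hx : x ⬝ᵥ x = 1) (i j : ι) :
    ((P i * P j) *ᵥ x) ⬝ᵥ ((P i * P j) *ᵥ x) = 1 := by
  rw [← mulVec_mulVec, hP.mulVec_dotProduct_mulVec_self, hP.mulVec_dotProduct_mulVec_self, hx]

lemma mul_mulVec_dotProduct_of_ne (hP : IsSymmCliffordSystem P) {i j : ι} (h : i ≠ j) :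
    ((P i * P j) *ᵥ x) ⬝ᵥ x = 0 := by
  rw [dotProduct_comm, dotProduct_mulVec_self_of_transpose_eq_neg (hP.transpose_mul h)]

lemma mul_mulVec_dotProduct_mulVec_of_ne (hP : IsSymmCliffordSystem P)
    (hMx : ∀ i, (P i *ᵥ x) ⬝ᵥ x = 0) {i j : ι} (h : i ≠ j) (k : ι) :
    ((P i * P j) *ᵥ x) ⬝ᵥ (P k *ᵥ x) = 0 := by
  rw [dotProduct_comm, (hP.isSymm k).mulVec_dotProduct, mulVec_mulVec, ← Matrix.mul_assoc]
  by_cases hki : k = i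
  · rw [hki, hP.mul_self, Matrix.one_mul, dotProduct_comm, hMx]
  by_cases hkj : k = j
  · rw [hkj, hP.mul_eq_neg_mul (Ne.symm h), Matrix.neg_mul, Matrix.mul_assoc, hP.mul_self,
      Matrix.mul_one, neg_mulVec, dotProduct_neg, dotProduct_comm, hMx, neg_zero]
  exact dotProduct_mulVec_self_of_transpose_eq_neg (hP.transpose_mul_mul hki hkj h) x

lemma adaptedFrame_orthonormal {κ : Type*} [DecidableEq κ] {e : κ → n → ℝ}
    (hP : IsSymmCliffordSystem P) (hx : x ⬝ᵥ x = 1) (hMx : ∀ i, (P i *ᵥ x) ⬝ᵥ x = 0)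
    (he : ∀ i j, e i ⬝ᵥ e j = if i = j then 1 else 0) (hex : ∀ i, e i ⬝ᵥ x = 0)
    (heP : ∀ i j, e i ⬝ᵥ (P j *ᵥ x) = 0) (a b : Unit ⊕ ι ⊕ κ) :
    adaptedFrame P x e a ⬝ᵥ adaptedFrame P x e b = if a = b then 1 else 0 := by
  have hxM : ∀ i, x ⬝ᵥ (P i *ᵥ x) = 0 := fun i => by rw [dotProduct_comm, hMx]
  have hxe : ∀ i, x ⬝ᵥ e i = 0 := fun i => by rw [dotProduct_comm, hex]
  have hPe : ∀ i j, (P j *ᵥ x) ⬝ᵥ e i = 0 := fun i j => by rw [dotProduct_comm, heP]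
  rcases a with _ | i | i <;> rcases b with _ | j | j <;>
    simp [adaptedFrame, hx, hMx, hxM, he, hex, hxe, heP, hPe, hP.mulVec_dotProduct_mulVec hx]

variable [Fintype ι] {κ : Type*} [Fintype κ] [DecidableEq κ] {e : κ → n → ℝ}

lemma sum_sq_dotProduct_mul_mulVec_of_ne (hP : IsSymmCliffordSystem P) (hx : x ⬝ᵥ x = 1)
    (hMx : ∀ i, (P i *ᵥ x) ⬝ᵥ x = 0)
    (hframe : ∀ a b, adaptedFrame P x e a ⬝ᵥ adaptedFrame P x e b = if a = b then 1 else 0)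
    (hcard : Fintype.card κ + Fintype.card ι + 1 = Fintype.card n) {i j : ι} (h : i ≠ j) :
    ∑ k, (e k ⬝ᵥ ((P i * P j) *ᵥ x)) ^ 2 = 1 := by
  have := dotProduct_self_eq_sum_sq_adaptedFrame hframe hcard ((P i * P j) *ᵥ x)
  simp only [hP.mul_mulVec_dotProduct_self hx, hP.mul_mulVec_dotProduct_of_ne h,
    hP.mul_mulVec_dotProduct_mulVec_of_ne hMx h, zero_pow two_ne_zero, Finset.sum_const_zero]
    at this
  simp only [dotProduct_comm (e _)]
  linarith

lemma sum_sq_mulVec_dotProduct_tangent (hP : IsSymmCliffordSystem P)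
    (he : ∀ i j, e i ⬝ᵥ e j = if i = j then 1 else 0) (heP : ∀ i j, e i ⬝ᵥ (P j *ᵥ x) = 0)
    (hframe : ∀ a b, adaptedFrame P x e a ⬝ᵥ adaptedFrame P x e b = if a = b then 1 else 0)
    (hcard : Fintype.card κ + Fintype.card ι + 1 = Fintype.card n) (α : ι) (i : κ) :
    ∑ j, ((P α *ᵥ e i) ⬝ᵥ e j) ^ 2 = 1 - ∑ β, (e i ⬝ᵥ ((P α * P β) *ᵥ x)) ^ 2 := by
  have hnorm : (P α *ᵥ e i) ⬝ᵥ (P α *ᵥ e i) = 1 := by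
    rw [hP.mulVec_dotProduct_mulVec_self, he, if_pos rfl]
  have hpos : (P α *ᵥ e i) ⬝ᵥ x = 0 := by rw [(hP.isSymm α).mulVec_dotProduct, heP]
  have hnormal (β : ι) : (P α *ᵥ e i) ⬝ᵥ (P β *ᵥ x) = e i ⬝ᵥ ((P α * P β) *ᵥ x) := by
    rw [(hP.isSymm α).mulVec_dotProduct, mulVec_mulVec]
  have := dotProduct_self_eq_sum_sq_adaptedFrame hframe hcard (P α *ᵥ e i)
  simp only [hnorm, hnormal, hpos, zero_pow two_ne_zero, zero_add] at this
  linarith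

lemma sum_sum_sq_mulVec_dotProduct (hP : IsSymmCliffordSystem P) (hx : x ⬝ᵥ x = 1)
    (hMx : ∀ i, (P i *ᵥ x) ⬝ᵥ x = 0) (he : ∀ i j, e i ⬝ᵥ e j = if i = j then 1 else 0)
    (hex : ∀ i, e i ⬝ᵥ x = 0) (heP : ∀ i j, e i ⬝ᵥ (P j *ᵥ x) = 0)
    (hcard : Fintype.card κ + Fintype.card ι + 1 = Fintype.card n) (α : ι) :
    ∑ i, ∑ j, ((P α *ᵥ e i) ⬝ᵥ e j) ^ 2 = (Fintype.card n : ℝ) - 2 * Fintype.card ι := by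
  have hframe := hP.adaptedFrame_orthonormal hx hMx he hex heP
  have hrow := hP.sum_sq_mulVec_dotProduct_tangent he heP hframe hcard α
  have hcol (β : ι) : ∑ i, (e i ⬝ᵥ ((P α * P β) *ᵥ x)) ^ 2 = 1 - if β = α then 1 else 0 := by
    split_ifs with h
    · simp [h, hP.mul_self, hex]
    · rw [sub_zero]
      exact hP.sum_sq_dotProduct_mul_mulVec_of_ne hx hMx hframe hcard (Ne.symm h)
  have hcard' : (Fintype.card κ : ℝ) = Fintype.card n - Fintype.card ι - 1 := by
    rw [← hcard]; push_cast; ring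
  rw [Finset.sum_congr rfl fun i _ => hrow i, Finset.sum_sub_distrib, Finset.sum_comm,
    Finset.sum_congr rfl fun β _ => hcol β]
  simp only [Finset.sum_sub_distrib, Finset.sum_ite_eq', Finset.sum_const, Finset.card_univ,
    Finset.mem_univ, if_true, nsmul_eq_mul, mul_one, hcard']
  ring

end IsSymmCliffordSystem

/-- For the focal submanifold `M₊` of the FKM-type isoparametric polynomial
determined by a symmetric Clifford system `{P₀,...,P_m}` on `ℝ^{2l}`, at any point `x ∈ M₊`,
the squared norm of the second fundamental form equals `S = 2(l-m-1)(m+1)`.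
Here `S = Σ_{α,i,j} ⟨A_α e_i, e_j⟩²` for an orthonormal tangent basis `{e_i}` of
`T_x M₊`, and the shape operator satisfies `⟨A_α e_i, e_j⟩ = -⟨P_α e_i, e_j⟩`. -/
theorem stmt_9 (m l : ℕ) (P : Fin (m + 1) → Matrix (Fin (2 * l)) (Fin (2 * l)) ℝ)
    (hsymm : ∀ i, (P i).IsSymm)
    (hcl : ∀ i j, P i * P j + P j * P i =
      if i = j then (2 : ℝ) • (1 : Matrix (Fin (2 * l)) (Fin (2 * l)) ℝ) else 0)
    (x : Fin (2 * l) → ℝ) (hx : x ⬝ᵥ x = 1) (hMx : ∀ i, (P i *ᵥ x) ⬝ᵥ x = 0)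
    (e : Fin (2 * l - m - 2) → Fin (2 * l) → ℝ)
    (he : ∀ i j, e i ⬝ᵥ e j = if i = j then 1 else 0)
    (hex : ∀ i, e i ⬝ᵥ x = 0) (heP : ∀ i j, e i ⬝ᵥ (P j *ᵥ x) = 0) :
    ∑ α : Fin (m + 1), ∑ i, ∑ j, (-((P α *ᵥ e i) ⬝ᵥ e j)) ^ 2 =
      2 * ((l : ℝ) - m - 1) * (m + 1) := by
  have hP : IsSymmCliffordSystem P := ⟨hsymm, hcl⟩
  have hcard : Fintype.card (Fin (2 * l - m - 2)) + Fintype.card (Fin (m + 1)) + 1 =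
      Fintype.card (Fin (2 * l)) := by
    -- the orthonormal frame rules out the truncation in `2 * l - m - 2`
    have := card_le_card_of_orthonormal (hP.adaptedFrame_orthonormal hx hMx he hex heP)
    simp only [Fintype.card_sum, Fintype.card_unit, Fintype.card_fin] at this ⊢
    omega
  simp only [neg_sq, hP.sum_sum_sq_mulVec_dotProduct hx hMx he hex heP hcard, Finset.sum_const,
    Finset.card_univ, Fintype.card_fin, nsmul_eq_mul]
  push_cast
  ring
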